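/- The field extension ℂ(k₁ + k₂, k₁k₂, ε_A, ε_A k₂ + ε_B k₁) ⊆ ℂ(k₁, k₂, ε_A, ε_B) has degree 2. -/

import Mathlib

/-!
Write `s = εA * k₂ + εB * k₁`. Since `k₂ = (k₁ + k₂) - k₁` and `εB = (s - εA * k₂) / k₁`, the big
field is `F9(k₁)`, and `k₁` is a root of `T² - (k₁ + k₂) T + k₁ k₂ ∈ F9[T]`; so the degree is at
most 2. The four elements `k₁, k₂, εA, s` generate the big field, which has transcendence degree 4,
so they are algebraically independent and the big field is the rational function field in them.
The automorphism exchanging `k₁` and `k₂` and fixing `εA` and `s` then fixes `F9` but not `k₁`,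
so `k₁ ∉ F9` and the degree is exactly 2.
-/

open MvPolynomial

noncomputable abbrev K9 : Type := FractionRing (MvPolynomial (Fin 4) ℂ)

noncomputable def k₁ : K9 := algebraMap (MvPolynomial (Fin 4) ℂ) K9 (X 0)
noncomputable def k₂ : K9 := algebraMap (MvPolynomial (Fin 4) ℂ) K9 (X 1)
noncomputable def εA : K9 := algebraMap (MvPolynomial (Fin 4) ℂ) K9 (X 2)
noncomputable def εB : K9 := algebraMap (MvPolynomial (Fin 4) ℂ) K9 (X 3)

/-- The subfield ℂ(k₁+k₂, k₁k₂, ε_A, ε_Ak₂+ε_Bk₁) of ℂ(k₁,k₂,ε_A,ε_B). -/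
noncomputable def F9 : Subfield K9 :=
  Subfield.closure
    ((Set.range (algebraMap ℂ K9)) ∪ {k₁ + k₂, k₁ * k₂, εA, εA * k₂ + εB * k₁})

open IntermediateField

universe u

theorem IntermediateField.isAlgebraic_algebraAdjoin_of_mem_adjoin {F E : Type*} [Field F]
    [Field E] [Algebra F E] {s : Set E} {z : E} (hz : z ∈ adjoin F s) :
    IsAlgebraic (Algebra.adjoin F s) z := by
  open scoped algebraAdjoinAdjoin in
  exact (Algebra.IsAlgebraic.isAlgebraic (⟨z, hz⟩ : adjoin F s)).algebraMap

namespace MvPolynomial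

variable {ι F : Type u} [Field F]

local notation "K" => FractionRing (MvPolynomial ι F)

theorem isTranscendenceBasis_algebraMap_X :
    IsTranscendenceBasis F fun i ↦ algebraMap (MvPolynomial ι F) K (X i) :=
  have := IsLocalization.isAlgebraic (S := K) (nonZeroDivisors (MvPolynomial ι F))
  (IsTranscendenceBasis.mvPolynomial ι F).algebraMap_comp

theorem algebraMap_mem_of_forall_X_mem {S : Subfield K} (hF : Set.range (algebraMap F K) ⊆ S)
    (hX : ∀ i, algebraMap (MvPolynomial ι F) K (X i) ∈ S) (p : MvPolynomial ι F) :
    algebraMap _ K p ∈ S := by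
  induction p using MvPolynomial.induction_on with
  | C a => exact hF ⟨a, (IsScalarTower.algebraMap_apply F (MvPolynomial ι F) K a).symm⟩
  | add p q hp hq => rw [map_add]; exact add_mem hp hq
  | mul_X p i hp => rw [map_mul]; exact mul_mem hp (hX i)

theorem subfield_eq_top_of_forall_X_mem {S : Subfield K} (hF : Set.range (algebraMap F K) ⊆ S)
    (hX : ∀ i, algebraMap (MvPolynomial ι F) K (X i) ∈ S) : S = ⊤ := by
  refine eq_top_iff.mpr fun z _ ↦ ?_
  obtain ⟨p, q, -, rfl⟩ := IsFractionRing.div_surjective (A := MvPolynomial ι F) z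
  exact div_mem (algebraMap_mem_of_forall_X_mem hF hX p) (algebraMap_mem_of_forall_X_mem hF hX q)

theorem adjoin_eq_top_of_forall_X_mem {y : ι → K}
    (hy : ∀ i, algebraMap (MvPolynomial ι F) K (X i) ∈ adjoin F (Set.range y)) :
    adjoin F (Set.range y) = ⊤ := by
  refine toSubfield_injective (subfield_eq_top_of_forall_X_mem ?_ hy)
  rintro _ ⟨a, rfl⟩
  exact (adjoin F (Set.range y)).algebraMap_mem a

theorem algebraicIndependent_of_forall_X_mem [Finite ι] {y : ι → K}
    (hy : ∀ i, algebraMap (MvPolynomial ι F) K (X i) ∈ adjoin F (Set.range y)) :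
    AlgebraicIndependent F y := by
  have hX := isTranscendenceBasis_algebraMap_X (ι := ι) (F := F)
  have : Algebra.IsAlgebraic (Algebra.adjoin F (Set.range y)) K :=
    hX.isAlgebraic_iff.mpr fun i ↦ isAlgebraic_algebraAdjoin_of_mem_adjoin (hy i)
  exact (Algebra.IsAlgebraic.isTranscendenceBasis_of_le_trdeg_of_finite F y
    hX.cardinalMk_eq_trdeg.le).1

noncomputable def fractionRingAlgEquivOfGenerators [Finite ι] {y : ι → K}
    (hy : ∀ i, algebraMap (MvPolynomial ι F) K (X i) ∈ adjoin F (Set.range y)) : K ≃ₐ[F] K :=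
  (algebraicIndependent_of_forall_X_mem hy).aevalEquivField.trans <|
    (equivOfEq (adjoin_eq_top_of_forall_X_mem hy)).trans topEquiv

theorem fractionRingAlgEquivOfGenerators_algebraMap_X [Finite ι] {y : ι → K}
    (hy : ∀ i, algebraMap (MvPolynomial ι F) K (X i) ∈ adjoin F (Set.range y)) (i : ι) :
    fractionRingAlgEquivOfGenerators hy (algebraMap (MvPolynomial ι F) K (X i)) = y i := by
  simp [fractionRingAlgEquivOfGenerators]

end MvPolynomial

-- In these coordinates `F9` is generated by `ℂ`, the symmetric functions of the first two
-- coordinates and the last two, so swapping the first two coordinates fixes it.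
noncomputable def swapCoords : Fin 4 → K9 := ![k₁, k₂, εA, εA * k₂ + εB * k₁]

theorem k₁_ne_zero : k₁ ≠ 0 :=
  (map_ne_zero_iff _ (IsFractionRing.injective _ _)).mpr (X_ne_zero 0)

theorem k₁_ne_k₂ : k₁ ≠ k₂ :=
  (IsFractionRing.injective _ _).ne ((X_injective (R := ℂ)).ne (by decide))

theorem εB_eq : εB = (εA * k₂ + εB * k₁ - εA * k₂) / k₁ := by
  field_simp [k₁_ne_zero]
  ring

theorem X_mem_of_forall_swapCoords_mem {S : Subfield K9} (h : ∀ i, swapCoords i ∈ S)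
    (i : Fin 4) : algebraMap (MvPolynomial (Fin 4) ℂ) K9 (X i) ∈ S := by
  fin_cases i
  · exact h 0
  · exact h 1
  · exact h 2
  · change εB ∈ S
    rw [εB_eq]
    exact div_mem (sub_mem (h 3) (mul_mem (h 2) (h 1))) (h 0)

theorem X_mem_adjoin_swapCoords (i : Fin 4) :
    algebraMap (MvPolynomial (Fin 4) ℂ) K9 (X i) ∈ adjoin ℂ (Set.range swapCoords) :=
  X_mem_of_forall_swapCoords_mem (S := (adjoin ℂ _).toSubfield)
    (fun j ↦ subset_adjoin ℂ _ (Set.mem_range_self j)) i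

theorem X_mem_adjoin_swapCoords_comp_swap (i : Fin 4) :
    algebraMap (MvPolynomial (Fin 4) ℂ) K9 (X i) ∈
      adjoin ℂ (Set.range (swapCoords ∘ Equiv.swap 0 1)) := by
  rw [(Equiv.swap 0 1).surjective.range_comp]
  exact X_mem_adjoin_swapCoords i

noncomputable def swapAut : K9 ≃ₐ[ℂ] K9 :=
  (fractionRingAlgEquivOfGenerators X_mem_adjoin_swapCoords).symm.trans
    (fractionRingAlgEquivOfGenerators X_mem_adjoin_swapCoords_comp_swap)

theorem swapAut_swapCoords (i : Fin 4) :
    swapAut (swapCoords i) = swapCoords (Equiv.swap 0 1 i) := by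
  rw [swapAut, AlgEquiv.trans_apply, ← fractionRingAlgEquivOfGenerators_algebraMap_X
    X_mem_adjoin_swapCoords, AlgEquiv.symm_apply_apply,
    fractionRingAlgEquivOfGenerators_algebraMap_X, Function.comp_apply]

theorem swapAut_k₁ : swapAut k₁ = k₂ := swapAut_swapCoords 0

theorem swapAut_k₂ : swapAut k₂ = k₁ := swapAut_swapCoords 1

theorem swapAut_εA : swapAut εA = εA := swapAut_swapCoords 2

theorem swapAut_εA_mul_k₂_add_εB_mul_k₁ :
    swapAut (εA * k₂ + εB * k₁) = εA * k₂ + εB * k₁ :=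
  swapAut_swapCoords 3

theorem swapAut_eq_self_of_mem_F9 {x : K9} (hx : x ∈ F9) : swapAut x = x := by
  refine RingHom.eqOn_field_closure (f := swapAut.toRingHom) (g := RingHom.id K9) ?_ hx
  rintro _ (⟨a, rfl⟩ | h)
  · exact swapAut.commutes a
  · simp only [Set.mem_insert_iff, Set.mem_singleton_iff] at h
    rcases h with rfl | rfl | rfl | rfl
    · simp [swapAut_k₁, swapAut_k₂, add_comm]
    · simp [swapAut_k₁, swapAut_k₂, mul_comm]
    · exact swapAut_εA
    · exact swapAut_εA_mul_k₂_add_εB_mul_k₁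

theorem k₁_notMem_F9 : k₁ ∉ F9 := fun h ↦ k₁_ne_k₂ <| by
  rw [← swapAut_eq_self_of_mem_F9 h, swapAut_k₁]

theorem algebraMap_mem_F9 (a : ℂ) : algebraMap ℂ K9 a ∈ F9 :=
  Subfield.subset_closure (Or.inl ⟨a, rfl⟩)

theorem k₁_add_k₂_mem_F9 : k₁ + k₂ ∈ F9 := Subfield.subset_closure (Or.inr (by simp))

theorem k₁_mul_k₂_mem_F9 : k₁ * k₂ ∈ F9 := Subfield.subset_closure (Or.inr (by simp))

theorem εA_mem_F9 : εA ∈ F9 := Subfield.subset_closure (Or.inr (by simp))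

theorem εA_mul_k₂_add_εB_mul_k₁_mem_F9 : εA * k₂ + εB * k₁ ∈ F9 :=
  Subfield.subset_closure (Or.inr (by simp))

theorem adjoin_k₁_eq_top : F9⟮k₁⟯ = ⊤ := by
  have hF9 {x : K9} (hx : x ∈ F9) : x ∈ F9⟮k₁⟯ := IntermediateField.algebraMap_mem F9⟮k₁⟯ ⟨x, hx⟩
  have hk₁ : k₁ ∈ F9⟮k₁⟯ := mem_adjoin_simple_self F9 k₁
  refine toSubfield_injective (subfield_eq_top_of_forall_X_mem ?_ ?_)
  · rintro _ ⟨a, rfl⟩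
    exact hF9 (algebraMap_mem_F9 a)
  refine X_mem_of_forall_swapCoords_mem fun i ↦ ?_
  fin_cases i
  · exact hk₁
  · change k₂ ∈ F9⟮k₁⟯
    rw [← add_sub_cancel_left k₁ k₂]
    exact sub_mem (hF9 k₁_add_k₂_mem_F9) hk₁
  · exact hF9 εA_mem_F9
  · exact hF9 εA_mul_k₂_add_εB_mul_k₁_mem_F9

noncomputable def sumProdQuadratic : Polynomial F9 :=
  .X ^ 2 - .C ⟨k₁ + k₂, k₁_add_k₂_mem_F9⟩ * .X + .C ⟨k₁ * k₂, k₁_mul_k₂_mem_F9⟩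

theorem sumProdQuadratic_monic : sumProdQuadratic.Monic := by
  unfold sumProdQuadratic
  monicity!

theorem sumProdQuadratic_natDegree : sumProdQuadratic.natDegree = 2 := by
  unfold sumProdQuadratic
  compute_degree!

theorem aeval_k₁_sumProdQuadratic : Polynomial.aeval k₁ sumProdQuadratic = 0 := by
  simp only [sumProdQuadratic, map_add, map_sub, map_mul, map_pow, Polynomial.aeval_X,
    Polynomial.aeval_C]
  change k₁ ^ 2 - (k₁ + k₂) * k₁ + k₁ * k₂ = 0
  ring

theorem isIntegral_k₁ : IsIntegral F9 k₁ :=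
  ⟨sumProdQuadratic, sumProdQuadratic_monic, by
    rw [← Polynomial.aeval_def, aeval_k₁_sumProdQuadratic]⟩

theorem minpoly_k₁_natDegree : (minpoly F9 k₁).natDegree = 2 := by
  refine le_antisymm ?_ ?_
  · rw [← sumProdQuadratic_natDegree]
    exact Polynomial.natDegree_le_natDegree
      (minpoly.min F9 k₁ sumProdQuadratic_monic aeval_k₁_sumProdQuadratic)
  · rw [minpoly.two_le_natDegree_iff isIntegral_k₁]
    rintro ⟨y, hy⟩
    exact k₁_notMem_F9 (hy ▸ y.2)

/-- The extension ℂ(k₁+k₂, k₁k₂, ε_A, ε_Ak₂+ε_Bk₁) ⊆ ℂ(k₁,k₂,ε_A,ε_B) has degree 2. -/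
theorem degree_two_extension : Module.finrank F9 K9 = 2 := by
  rw [← finrank_top', ← adjoin_k₁_eq_top, adjoin.finrank isIntegral_k₁, minpoly_k₁_natDegree]
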